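/- Let μ be a continuous capacity on a measurable space (Ω,𝓕) and let Y = {Y_n}_{n∈ℕ} be a sequence of real-valued random variables on Ω, inducing the measurable map Y : Ω → ℝ^ℕ, ω ↦ (Y_1(ω), Y_2(ω), …), where ℝ^ℕ carries the product (cylinder) σ-algebra. Let μ_Y(C) = μ(Y⁻¹(C)) be the pushforward capacity on ℝ^ℕ, and let τ : ℝ^ℕ → ℝ^ℕ be the shift τ(x_1, x_2, x_3, …) = (x_2, x_3, x_4, …). Then {Y_n}_{n∈ℕ} is stationary with respect to μ if and only if μ_Y is τ-invariant, i.e. μ_Y(τ⁻¹C) = μ_Y(C) for every C in the product σ-algebra. -/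
import Mathlib


open MeasureTheory Filter Topology Set

def IsFinAddProb {Ω : Type*} [MeasurableSpace Ω] (P : Set Ω → ℝ) : Prop :=
  P ∅ = 0 ∧ P Set.univ = 1 ∧
    (∀ A : Set Ω, MeasurableSet A → 0 ≤ P A ∧ P A ≤ 1) ∧
    (∀ A B : Set Ω, MeasurableSet A → MeasurableSet B → Disjoint A B →
      P (A ∪ B) = P A + P B)

def IsCapacity {Ω : Type*} [MeasurableSpace Ω] (μ : Set Ω → ℝ) : Prop :=
  μ ∅ = 0 ∧ μ Set.univ = 1 ∧
    ∀ A B : Set Ω, MeasurableSet A → MeasurableSet B → A ⊆ B → μ A ≤ μ B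

def ContBelow {Ω : Type*} [MeasurableSpace Ω] (μ : Set Ω → ℝ) : Prop :=
  ∀ A : ℕ → Set Ω, (∀ n, MeasurableSet (A n)) → Monotone A →
    Filter.Tendsto (fun n => μ (A n)) Filter.atTop (nhds (μ (⋃ n, A n)))

def ContAbove {Ω : Type*} [MeasurableSpace Ω] (μ : Set Ω → ℝ) : Prop :=
  ∀ A : ℕ → Set Ω, (∀ n, MeasurableSet (A n)) → Antitone A →
    Filter.Tendsto (fun n => μ (A n)) Filter.atTop (nhds (μ (⋂ n, A n)))

def ContAtEmpty {Ω : Type*} [MeasurableSpace Ω] (μ : Set Ω → ℝ) : Prop :=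
  ∀ A : ℕ → Set Ω, (∀ n, MeasurableSet (A n)) → Antitone A → (⋂ n, A n) = ∅ →
    Filter.Tendsto (fun n => μ (A n)) Filter.atTop (nhds 0)

def ContAtUniv {Ω : Type*} [MeasurableSpace Ω] (μ : Set Ω → ℝ) : Prop :=
  ∀ A : ℕ → Set Ω, (∀ n, MeasurableSet (A n)) → Monotone A → (⋃ n, A n) = Set.univ →
    Filter.Tendsto (fun n => μ (A n)) Filter.atTop (nhds 1)

def conjCap {Ω : Type*} (μ : Set Ω → ℝ) (A : Set Ω) : ℝ := 1 - μ Aᶜ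

noncomputable def choquet {Ω : Type*} (μ : Set Ω → ℝ) (ξ : Ω → ℝ) : ℝ :=
  (∫ t in Set.Ioi (0:ℝ), μ {ω | ξ ω ≥ t}) +
    (∫ t in Set.Iio (0:ℝ), (μ {ω | ξ ω ≥ t} - 1))

noncomputable def choquetE {Ω : Type*} (μ : Set Ω → ℝ) (ξ : Ω → EReal) : ℝ :=
  (∫ t in Set.Ioi (0:ℝ), μ {ω | (t : EReal) ≤ ξ ω}) +
    (∫ t in Set.Iio (0:ℝ), (μ {ω | (t : EReal) ≤ ξ ω} - 1))

def UpperProbOf {Ω : Type*} [MeasurableSpace Ω] (𝒮 : Set (Set Ω → ℝ)) (V : Set Ω → ℝ) : Prop :=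
  ∀ A : Set Ω, MeasurableSet A → V A = sSup ((fun P => P A) '' 𝒮)

def LowerProbOf {Ω : Type*} [MeasurableSpace Ω] (𝒮 : Set (Set Ω → ℝ)) (v : Set Ω → ℝ) : Prop :=
  ∀ A : Set Ω, MeasurableSet A → v A = sInf ((fun P => P A) '' 𝒮)

def ErgodicCap {Ω : Type*} [MeasurableSpace Ω] (μ : Set Ω → ℝ) (θ : Ω → Ω) : Prop :=
  ∀ B : Set Ω, MeasurableSet B → θ ⁻¹' B = B →
    (μ B = 0 ∨ μ B = 1) ∧ (μ B = 0 ∨ μ Bᶜ = 0)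

def PreservesCap {Ω : Type*} [MeasurableSpace Ω] (μ : Set Ω → ℝ) (θ : Ω → Ω) : Prop :=
  ∀ A : Set Ω, MeasurableSet A → μ (θ ⁻¹' A) = μ A

def IndepSigmaWrt {Ω : Type*} (μ : Set Ω → ℝ) (m₁ m₂ : MeasurableSpace Ω) : Prop :=
  ∀ A B : Set Ω, MeasurableSet[m₁] A → MeasurableSet[m₂] B → μ (A ∩ B) = μ A * μ B

def StationaryCap {Ω : Type*} [MeasurableSpace Ω] (μ : Set Ω → ℝ) (Y : ℕ → Ω → ℝ) : Prop :=
  ∀ (n k : ℕ) (A : Set (Fin (k + 1) → ℝ)), MeasurableSet A →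
    μ {ω | (fun i : Fin (k + 1) => Y (n + (i : ℕ)) ω) ∈ A} =
      μ {ω | (fun i : Fin (k + 1) => Y (n + 1 + (i : ℕ)) ω) ∈ A}

section MonoClassThm

variable {X : Type*}

/-- A monotone class: closed under monotone countable unions and intersections. -/
def IsMonoClass (S : Set (Set X)) : Prop :=
  (∀ A : ℕ → Set X, (∀ n, A n ∈ S) → Monotone A → (⋃ n, A n) ∈ S) ∧
  (∀ A : ℕ → Set X, (∀ n, A n ∈ S) → Antitone A → (⋂ n, A n) ∈ S)

def monoGen (𝒜 : Set (Set X)) : Set (Set X) := ⋂₀ {S | IsMonoClass S ∧ 𝒜 ⊆ S}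

lemma subset_monoGen (𝒜 : Set (Set X)) : 𝒜 ⊆ monoGen 𝒜 :=
  fun _ ht S hS => hS.2 ht

lemma monoGen_le {𝒜 S : Set (Set X)} (hS : IsMonoClass S) (h : 𝒜 ⊆ S) : monoGen 𝒜 ⊆ S :=
  fun _ ht => ht S ⟨hS, h⟩

lemma isMonoClass_monoGen (𝒜 : Set (Set X)) : IsMonoClass (monoGen 𝒜) := by
  constructor
  · intro A hA hmono S hS
    exact hS.1.1 A (fun n => hA n S hS) hmono
  · intro A hA hanti S hS
    exact hS.1.2 A (fun n => hA n S hS) hanti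

/-- The auxiliary "good sets" class. -/
def monoD (𝒜 : Set (Set X)) (A : Set X) : Set (Set X) :=
  {B | A ∪ B ∈ monoGen 𝒜 ∧ A ∩ B ∈ monoGen 𝒜 ∧ A \ B ∈ monoGen 𝒜 ∧ B \ A ∈ monoGen 𝒜}

lemma mem_monoD_comm {𝒜 : Set (Set X)} {A B : Set X} (h : B ∈ monoD 𝒜 A) : A ∈ monoD 𝒜 B := by
  obtain ⟨h1, h2, h3, h4⟩ := h
  exact ⟨by rwa [union_comm], by rwa [inter_comm], h4, h3⟩

lemma isMonoClass_monoD (𝒜 : Set (Set X)) (A : Set X) : IsMonoClass (monoD 𝒜 A) := by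
  obtain ⟨hM1, hM2⟩ := isMonoClass_monoGen 𝒜
  constructor
  · intro B hB hmono
    refine ⟨?_, ?_, ?_, ?_⟩
    · rw [show A ∪ ⋃ n, B n = ⋃ n, (A ∪ B n) by rw [union_iUnion]]
      exact hM1 _ (fun n => (hB n).1) (fun i j hij => union_subset_union_right A (hmono hij))
    · rw [show A ∩ ⋃ n, B n = ⋃ n, (A ∩ B n) by rw [inter_iUnion]]
      exact hM1 _ (fun n => (hB n).2.1) (fun i j hij => inter_subset_inter_right A (hmono hij))
    · rw [show A \ ⋃ n, B n = ⋂ n, (A \ B n) by rw [diff_iUnion]]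
      exact hM2 _ (fun n => (hB n).2.2.1) (fun i j hij => diff_subset_diff_right (hmono hij))
    · rw [show (⋃ n, B n) \ A = ⋃ n, (B n \ A) by rw [iUnion_diff]]
      exact hM1 _ (fun n => (hB n).2.2.2) (fun i j hij => diff_subset_diff_left (hmono hij))
  · intro B hB hanti
    refine ⟨?_, ?_, ?_, ?_⟩
    · rw [show A ∪ ⋂ n, B n = ⋂ n, (A ∪ B n) by rw [union_iInter]]
      exact hM2 _ (fun n => (hB n).1) (fun i j hij => union_subset_union_right A (hanti hij))
    · rw [show A ∩ ⋂ n, B n = ⋂ n, (A ∩ B n) by rw [inter_iInter]]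
      exact hM2 _ (fun n => (hB n).2.1) (fun i j hij => inter_subset_inter_right A (hanti hij))
    · rw [show A \ ⋂ n, B n = ⋃ n, (A \ B n) by rw [diff_iInter]]
      exact hM1 _ (fun n => (hB n).2.2.1) (fun i j hij => diff_subset_diff_right (hanti hij))
    · rw [show (⋂ n, B n) \ A = ⋂ n, (B n \ A) by simp [diff_eq, iInter_inter]]
      exact hM2 _ (fun n => (hB n).2.2.2) (fun i j hij => diff_subset_diff_left (hanti hij))

lemma monoGen_subset_monoD {𝒜 : Set (Set X)} (h𝒜 : IsSetAlgebra 𝒜)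
    {A : Set X} (hA : A ∈ monoGen 𝒜) : monoGen 𝒜 ⊆ monoD 𝒜 A := by
  have step1 : ∀ B ∈ 𝒜, monoGen 𝒜 ⊆ monoD 𝒜 B := by
    intro B hB
    refine monoGen_le (isMonoClass_monoD 𝒜 B) ?_
    intro C hC
    exact ⟨subset_monoGen 𝒜 (h𝒜.union_mem hB hC), subset_monoGen 𝒜 (h𝒜.inter_mem hB hC),
      subset_monoGen 𝒜 (h𝒜.diff_mem hB hC), subset_monoGen 𝒜 (h𝒜.diff_mem hC hB)⟩
  refine monoGen_le (isMonoClass_monoD 𝒜 A) ?_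
  intro B hB
  exact mem_monoD_comm (step1 B hB hA)

lemma monoGen_union {𝒜 : Set (Set X)} (h𝒜 : IsSetAlgebra 𝒜)
    {A B : Set X} (hA : A ∈ monoGen 𝒜) (hB : B ∈ monoGen 𝒜) : A ∪ B ∈ monoGen 𝒜 :=
  (monoGen_subset_monoD h𝒜 hA hB).1

lemma monoGen_compl {𝒜 : Set (Set X)} (h𝒜 : IsSetAlgebra 𝒜)
    {A : Set X} (hA : A ∈ monoGen 𝒜) : Aᶜ ∈ monoGen 𝒜 := by
  have huniv : (univ : Set X) ∈ monoGen 𝒜 := subset_monoGen 𝒜 h𝒜.univ_mem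
  have := (monoGen_subset_monoD h𝒜 huniv hA).2.2.1
  rwa [compl_eq_univ_diff]

/-- Monotone class theorem: the monotone class generated by a set algebra contains the
generated σ-algebra. -/
theorem measurableSet_mem_monoGen {𝒜 : Set (Set X)} (h𝒜 : IsSetAlgebra 𝒜)
    {s : Set X} (hs : MeasurableSet[MeasurableSpace.generateFrom 𝒜] s) : s ∈ monoGen 𝒜 := by
  let m : MeasurableSpace X :=
    { MeasurableSet' := fun t => t ∈ monoGen 𝒜
      measurableSet_empty := subset_monoGen 𝒜 h𝒜.empty_mem
      measurableSet_compl := fun t ht => monoGen_compl h𝒜 ht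
      measurableSet_iUnion := by
        intro f hf
        -- partial unions
        let g : ℕ → Set X := fun n => Nat.rec (f 0) (fun n gn => gn ∪ f (n + 1)) n
        have hg : ∀ n, g n ∈ monoGen 𝒜 := by
          intro n
          induction n with
          | zero => exact hf 0
          | succ n ih => exact monoGen_union h𝒜 ih (hf (n + 1))
        have hgm : Monotone g := monotone_nat_of_le_succ (fun n => subset_union_left)
        have hgu : (⋃ n, g n) = ⋃ n, f n := by
          apply subset_antisymm
          · refine iUnion_subset fun n => ?_
            induction n with
            | zero => exact subset_iUnion f 0
            | succ n ih => exact union_subset ih (subset_iUnion f (n + 1))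
          · refine iUnion_subset fun n => ?_
            have : f n ⊆ g n := by
              cases n with
              | zero => exact subset_rfl
              | succ n => exact subset_union_right
            exact this.trans (subset_iUnion g n)
        rw [← hgu]
        exact (isMonoClass_monoGen 𝒜).1 g hg hgm }
  have hle : MeasurableSpace.generateFrom 𝒜 ≤ m :=
    MeasurableSpace.generateFrom_le (fun t ht => subset_monoGen 𝒜 ht)
  exact hle s hs

end MonoClassThm

theorem stmt18 {Ω : Type*} [MeasurableSpace Ω]
    (μ : Set Ω → ℝ) (hcap : IsCapacity μ) (hb : ContBelow μ) (ha : ContAbove μ)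
    (Y : ℕ → Ω → ℝ) (hY : ∀ n, Measurable (Y n)) :
    StationaryCap μ Y ↔
      ∀ C : Set (ℕ → ℝ), MeasurableSet C →
        μ ((fun ω (n : ℕ) => Y n ω) ⁻¹' ((fun (x : ℕ → ℝ) (n : ℕ) => x (n + 1)) ⁻¹' C)) =
          μ ((fun ω (n : ℕ) => Y n ω) ⁻¹' C) := by
  set f : Ω → (ℕ → ℝ) := fun ω (n : ℕ) => Y n ω with hf
  set τ : (ℕ → ℝ) → (ℕ → ℝ) := fun (x : ℕ → ℝ) (n : ℕ) => x (n + 1) with hτ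
  have hfm : Measurable f := measurable_pi_lambda _ (fun n => hY n)
  have hτm : Measurable τ := measurable_pi_lambda _ (fun n => measurable_pi_apply (n + 1))
  constructor
  · -- stationarity → shift-invariance, by monotone class argument
    intro h C hC
    set S : Set (Set (ℕ → ℝ)) :=
      {C | MeasurableSet C ∧ μ (f ⁻¹' (τ ⁻¹' C)) = μ (f ⁻¹' C)} with hS
    have hSmono : IsMonoClass S := by
      constructor
      · intro A hA hmono
        have hmeas : MeasurableSet (⋃ n, A n) := MeasurableSet.iUnion (fun n => (hA n).1)
        refine ⟨hmeas, ?_⟩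
        have h1 : Tendsto (fun n => μ (f ⁻¹' (τ ⁻¹' A n))) atTop
            (nhds (μ (f ⁻¹' (τ ⁻¹' ⋃ n, A n)))) := by
          have : f ⁻¹' (τ ⁻¹' ⋃ n, A n) = ⋃ n, f ⁻¹' (τ ⁻¹' A n) := by
            simp [preimage_iUnion]
          rw [this]
          exact hb _ (fun n => hfm (hτm (hA n).1))
            (fun i j hij => preimage_mono (preimage_mono (hmono hij)))
        have h2 : Tendsto (fun n => μ (f ⁻¹' A n)) atTop
            (nhds (μ (f ⁻¹' ⋃ n, A n))) := by
          have : f ⁻¹' ⋃ n, A n = ⋃ n, f ⁻¹' A n := by simp [preimage_iUnion]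
          rw [this]
          exact hb _ (fun n => hfm (hA n).1)
            (fun i j hij => preimage_mono (hmono hij))
        have heq : (fun n => μ (f ⁻¹' (τ ⁻¹' A n))) = fun n => μ (f ⁻¹' A n) :=
          funext fun n => (hA n).2
        rw [heq] at h1
        exact tendsto_nhds_unique h1 h2
      · intro A hA hanti
        have hmeas : MeasurableSet (⋂ n, A n) := MeasurableSet.iInter (fun n => (hA n).1)
        refine ⟨hmeas, ?_⟩
        have h1 : Tendsto (fun n => μ (f ⁻¹' (τ ⁻¹' A n))) atTop
            (nhds (μ (f ⁻¹' (τ ⁻¹' ⋂ n, A n)))) := by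
          have : f ⁻¹' (τ ⁻¹' ⋂ n, A n) = ⋂ n, f ⁻¹' (τ ⁻¹' A n) := by
            simp [preimage_iInter]
          rw [this]
          exact ha _ (fun n => hfm (hτm (hA n).1))
            (fun i j hij => preimage_mono (preimage_mono (hanti hij)))
        have h2 : Tendsto (fun n => μ (f ⁻¹' A n)) atTop
            (nhds (μ (f ⁻¹' ⋂ n, A n))) := by
          have : f ⁻¹' ⋂ n, A n = ⋂ n, f ⁻¹' A n := by simp [preimage_iInter]
          rw [this]
          exact ha _ (fun n => hfm (hA n).1)
            (fun i j hij => preimage_mono (hanti hij))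
        have heq : (fun n => μ (f ⁻¹' (τ ⁻¹' A n))) = fun n => μ (f ⁻¹' A n) :=
          funext fun n => (hA n).2
        rw [heq] at h1
        exact tendsto_nhds_unique h1 h2
    have halg : IsSetAlgebra (measurableCylinders (fun _ : ℕ => ℝ)) :=
      { empty_mem := empty_mem_measurableCylinders _
        compl_mem := fun _ hs => compl_mem_measurableCylinders hs
        union_mem := fun _ _ hs ht => union_mem_measurableCylinders hs ht }
    have hcyl : measurableCylinders (fun _ : ℕ => ℝ) ⊆ S := by
      intro t ht
      obtain ⟨s, T, hT, rfl⟩ := (mem_measurableCylinders t).mp ht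
      refine ⟨hT.cylinder, ?_⟩
      -- rewrite the cylinder using a Fin (k+1) base
      classical
      set k : ℕ := s.sup id with hk
      have hsk : ∀ i ∈ s, i < k + 1 := fun i hi => Nat.lt_succ_of_le (Finset.le_sup (f := id) hi)
      set e : (Fin (k + 1) → ℝ) → (∀ i : s, ℝ) :=
        fun y i => y ⟨(i : ℕ), hsk i i.2⟩ with he
      have hem : Measurable e :=
        measurable_pi_lambda _ (fun i => measurable_pi_apply _)
      set A : Set (Fin (k + 1) → ℝ) := e ⁻¹' T with hA
      have hAm : MeasurableSet A := hem hT
      have hcyl_eq : cylinder s T = {x : ℕ → ℝ | (fun i : Fin (k + 1) => x (i : ℕ)) ∈ A} := by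
        ext x
        simp only [mem_cylinder, mem_setOf_eq, hA, mem_preimage]
        rfl
      have key := h 0 k A hAm
      simp only [Nat.zero_add] at key
      have e1 : f ⁻¹' (τ ⁻¹' cylinder s T) =
          {ω | (fun i : Fin (k + 1) => Y ((i : ℕ) + 1) ω) ∈ A} := by
        rw [hcyl_eq]; rfl
      have e2 : f ⁻¹' cylinder s T = {ω | (fun i : Fin (k + 1) => Y (i : ℕ) ω) ∈ A} := by
        rw [hcyl_eq]; rfl
      have hsw : {ω | (fun i : Fin (k + 1) => Y (1 + (i : ℕ)) ω) ∈ A} =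
          {ω | (fun i : Fin (k + 1) => Y ((i : ℕ) + 1) ω) ∈ A} := by
        ext ω
        simp only [mem_setOf_eq]
        rw [show (fun i : Fin (k + 1) => Y (1 + (i : ℕ)) ω) =
          fun i : Fin (k + 1) => Y ((i : ℕ) + 1) ω from funext fun i => by rw [Nat.add_comm]]
      rw [e1, e2, ← hsw, ← key]
    have : C ∈ S := by
      refine measurableSet_mem_monoGen halg ?_ S ⟨hSmono, hcyl⟩
      rwa [generateFrom_measurableCylinders]
    exact this.2
  · -- shift-invariance → stationarity
    intro h n k A hA
    set C : Set (ℕ → ℝ) := {x | (fun i : Fin (k + 1) => x (n + (i : ℕ))) ∈ A} with hC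
    have hCm : MeasurableSet C := by
      have : Measurable (fun (x : ℕ → ℝ) (i : Fin (k + 1)) => x (n + (i : ℕ))) :=
        measurable_pi_lambda _ (fun i => measurable_pi_apply _)
      exact this hA
    have := h C hCm
    have e1 : f ⁻¹' C = {ω | (fun i : Fin (k + 1) => Y (n + (i : ℕ)) ω) ∈ A} := rfl
    have e2 : f ⁻¹' (τ ⁻¹' C) = {ω | (fun i : Fin (k + 1) => Y (n + 1 + (i : ℕ)) ω) ∈ A} := by
      have d1 : f ⁻¹' (τ ⁻¹' C) = {ω | (fun i : Fin (k + 1) => Y (n + (i : ℕ) + 1) ω) ∈ A} := rfl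
      rw [d1]
      ext ω
      simp only [mem_setOf_eq]
      rw [show (fun i : Fin (k + 1) => Y (n + (i : ℕ) + 1) ω) =
        fun i : Fin (k + 1) => Y (n + 1 + (i : ℕ)) ω from
        funext fun i => by rw [show n + (i : ℕ) + 1 = n + 1 + (i : ℕ) by omega]]
    rw [e1, e2] at this
    exact this.symm
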